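/- Let Γ be a finite connected simplicial graph with no SIL whose vertices are labeled by nontrivial cyclic groups. Then the homomorphism f̃: G_{Γ₀} → G_{Γ̃} determined by v ↦ p_v is injective. -/

import Mathlib

open Monoid

namespace ArXiv

universe u uG

variable {V : Type u}

/-- The star of a vertex: the vertex together with its neighbors. -/
def star (Γ : SimpleGraph V) (v : V) : Set V := insert v (Γ.neighborSet v)

/-- `C ⊆ V` is the vertex set of a connected component of the full subgraph of `Γ`
induced on `S`. -/
def IsCompOf (Γ : SimpleGraph V) (S : Set V) (C : Set V) : Prop :=
  ∃ c : (Γ.induce S).ConnectedComponent, C = Subtype.val '' c.supp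

/-- `Γ` has a separating intersection of links: there are distinct non-adjacent vertices
`v, w` such that some connected component of `Γ ∖ (lk(v) ∩ lk(w))` contains neither `v`
nor `w`. -/
def HasSIL (Γ : SimpleGraph V) : Prop :=
  ∃ v w : V, v ≠ w ∧ ¬ Γ.Adj v w ∧
    ∃ C : Set V, IsCompOf Γ ((Γ.neighborSet v ∩ Γ.neighborSet w)ᶜ) C ∧ v ∉ C ∧ w ∉ C

variable (Γ : SimpleGraph V) (G : V → Type uG) [∀ v, Group (G v)]

/-- The commutator relators defining the graph product. -/
def rels : Set (Monoid.CoprodI G) :=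
  {x | ∃ (v w : V) (_ : Γ.Adj v w) (g : G v) (h : G w),
    x = CoprodI.of g * CoprodI.of h * (CoprodI.of g)⁻¹ * (CoprodI.of h)⁻¹}

/-- The graph product of the vertex groups `G v` over the graph `Γ`: the quotient of the
free product by the normal closure of the commutators of adjacent vertex groups. -/
def GraphProduct : Type (max u uG) :=
  Monoid.CoprodI G ⧸ Subgroup.normalClosure (rels Γ G)

instance : Group (GraphProduct Γ G) :=
  inferInstanceAs (Group (Monoid.CoprodI G ⧸ Subgroup.normalClosure (rels Γ G)))

/-- The canonical map from a vertex group into the graph product. -/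
def of {v : V} : G v →* GraphProduct Γ G :=
  (QuotientGroup.mk' (Subgroup.normalClosure (rels Γ G))).comp CoprodI.of

theorem of_commute {v w : V} (h : Γ.Adj v w) (g : G v) (k : G w) :
    Commute (of Γ G g) (of Γ G k) := by
  rw [← commutatorElement_eq_one_iff_commute]
  have hmem : (CoprodI.of g * CoprodI.of k * (CoprodI.of g)⁻¹ * (CoprodI.of k)⁻¹ :
      Monoid.CoprodI G) ∈ Subgroup.normalClosure (rels Γ G) :=
    Subgroup.subset_normalClosure ⟨v, w, h, g, k, rfl⟩
  have h1 : (QuotientGroup.mk' (Subgroup.normalClosure (rels Γ G)))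
      (CoprodI.of g * CoprodI.of k * (CoprodI.of g)⁻¹ * (CoprodI.of k)⁻¹) = 1 :=
    (QuotientGroup.eq_one_iff _).mpr hmem
  simp only [map_mul, map_inv] at h1
  rw [commutatorElement_def]
  exact h1

/-- `π` is the partial conjugation `π_{v,C}`, for vertex groups with chosen generators
`gen`: it conjugates the generators in `C` by (the generator of) `v` and fixes all other
generators. -/
def IsPartialConj (gen : ∀ v, G v) (π : MulAut (GraphProduct Γ G)) (v : V) (C : Set V) :
    Prop :=
  (∀ u ∈ C, ∀ g : G u, π (of Γ G g) = of Γ G (gen v) * of Γ G g * (of Γ G (gen v))⁻¹) ∧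
  (∀ u ∉ C, ∀ g : G u, π (of Γ G g) = of Γ G g)

/-- `π` is the partial conjugation `π_{a,C}` by the element `a` of the vertex group `G v`:
it conjugates the vertex groups in `C` by `a` and fixes all other vertex groups. -/
def IsPartialConjBy {v : V} (a : G v) (π : MulAut (GraphProduct Γ G)) (C : Set V) : Prop :=
  (∀ u ∈ C, ∀ g : G u, π (of Γ G g) = of Γ G a * of Γ G g * (of Γ G a)⁻¹) ∧
  (∀ u ∉ C, ∀ g : G u, π (of Γ G g) = of Γ G g)

/-- The vertex set of the graph `Γ̃`: pairs `p_{v,C}` where `C` is a connected component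
of `Γ ∖ st(v)`. -/
def TV : Type u := {p : V × Set V // IsCompOf Γ ((star Γ p.1)ᶜ) p.2}

/-- The graph `Γ̃`: vertices `p_{v,C}` and `p_{w,D}` are joined by an edge unless
`v, w` are distinct non-adjacent vertices with `v ∈ D` and `w ∈ C`. -/
def tilde : SimpleGraph (TV Γ) where
  Adj p q := p ≠ q ∧
    ¬(p.1.1 ≠ q.1.1 ∧ ¬ Γ.Adj p.1.1 q.1.1 ∧ p.1.1 ∈ q.1.2 ∧ q.1.1 ∈ p.1.2)
  symm := ⟨by
    rintro p q ⟨h1, h2⟩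
    exact ⟨h1.symm, fun ⟨a, b, c, d⟩ => h2 ⟨a.symm, fun e => b e.symm, d, c⟩⟩⟩
  loopless := ⟨fun p h => h.1 rfl⟩

/-- The graph product `G_{Γ̃}`, where the vertex `p_{v,C}` is labeled by (a copy of) the
group `G v`. -/
abbrev TildeProduct : Type (max u uG) :=
  GraphProduct (tilde Γ) (fun p : TV Γ => G p.1.1)

/-- The element `p_v = ∏_C p_{v,C} ∈ G_{Γ̃}`, the product over all connected components
`C` of `Γ ∖ st(v)` (the factors pairwise commute). -/
noncomputable def pvert [Finite V] (gen : ∀ v, G v) (v : V) : TildeProduct Γ G :=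
  haveI : Fintype {C : Set V // IsCompOf Γ ((star Γ v)ᶜ) C} := Fintype.ofFinite _
  Finset.noncommProd (Finset.univ : Finset {C : Set V // IsCompOf Γ ((star Γ v)ᶜ) C})
    (fun c => of (tilde Γ) (fun p : TV Γ => G p.1.1) (v := ⟨(v, c.1), c.2⟩) (gen v))
    (by
      intro a _ b _ hab
      have hadj : (tilde Γ).Adj ⟨(v, a.1), a.2⟩ ⟨(v, b.1), b.2⟩ := by
        refine ⟨fun h => hab (Subtype.ext (congrArg (fun x : TV Γ => x.1.2) h)), ?_⟩
        rintro ⟨hne, -⟩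
        exact hne rfl
      exact of_commute (tilde Γ) (fun p : TV Γ => G p.1.1) hadj (gen v) (gen v))

/-- The set `Δ` of vertices adjacent to every other vertex of `Γ`. -/
def Delta (Γ : SimpleGraph V) : Set V := {v | ∀ u, u ≠ v → Γ.Adj v u}

/-- The subgroup of the graph product generated by the vertex groups `G v`, `v ∈ T`. -/
def vertexSubgroup (T : Set V) : Subgroup (GraphProduct Γ G) :=
  Subgroup.closure {x | ∃ v ∈ T, ∃ g : G v, x = of Γ G g}

/-- `w` is a reduced word for the element `g` of the graph product: a minimal length
expression of `g` as a product of nontrivial elements of vertex groups. -/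
def IsReducedWord (g : GraphProduct Γ G) (w : List (Σ v : V, G v)) : Prop :=
  (w.map fun l => of Γ G l.2).prod = g ∧ (∀ l ∈ w, l.2 ≠ 1) ∧
    ∀ w' : List (Σ v : V, G v), (w'.map fun l => of Γ G l.2).prod = g →
      w.length ≤ w'.length


/-!
Adjoin to `Γ` an isolated vertex `*` labelled by `ℤ`, giving `Γ⁺`. Without a SIL one can choose,
for every `v ∉ Δ`, a component `sel v` of `Γ ∖ st(v)` such that `w ∈ sel v` or `v ∈ sel w`
whenever `v ≠ w` are not adjacent. Sending `p_{v,C}` to the partial conjugation of `G_{Γ⁺}` by `v`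
on `C`, extended to `*` when `C = sel v`, respects the commutation relations of `G_{Γ̃}`, so it
defines `Φ : G_{Γ̃} → Aut(G_{Γ⁺})`. The sets moved by the factors of `p_v` partition the
complement of `st(v)` in `Γ⁺`, so `Φ (p_v)` is conjugation by `v`. Hence if `f̃ x = 1`, then `x`
commutes with the generator of `*` in `G_{Γ⁺}`; killing `Δ` maps `G_{Γ⁺}` onto the free product
`G_{Γ₀} * ℤ`, where this forces `x = 1`.
-/

namespace GraphProduct

variable {W : Type*} {Λ : SimpleGraph W} {H : W → Type*} [∀ w, Group (H w)] {K : Type*} [Group K]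

variable (Λ H) in
noncomputable def lift (φ : ∀ w, H w →* K)
    (hφ : ∀ x y, Λ.Adj x y → ∀ (g : H x) (k : H y), Commute (φ x g) (φ y k)) :
    GraphProduct Λ H →* K :=
  QuotientGroup.lift _ (CoprodI.lift φ) <| Subgroup.normalClosure_le_normal <| by
    rintro _ ⟨x, y, hxy, g, k, rfl⟩
    simpa [commutatorElement_def] using (hφ x y hxy g k).commutator_eq

@[simp]
theorem lift_of {φ : ∀ w, H w →* K}
    {hφ : ∀ x y, Λ.Adj x y → ∀ (g : H x) (k : H y), Commute (φ x g) (φ y k)} {w : W} (g : H w) :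
    lift Λ H φ hφ (of Λ H g) = φ w g :=
  CoprodI.lift_of φ g

theorem hom_ext {f₁ f₂ : GraphProduct Λ H →* K}
    (h : ∀ w (g : H w), f₁ (of Λ H g) = f₂ (of Λ H g)) : f₁ = f₂ :=
  QuotientGroup.monoidHom_ext _ <| CoprodI.ext_hom _ _ fun w => MonoidHom.ext (h w)

theorem hom_ext_of_zpowers {f₁ f₂ : GraphProduct Λ H →* K} {gen : ∀ w, H w}
    (hgen : ∀ w, Subgroup.zpowers (gen w) = ⊤)
    (h : ∀ w, f₁ (of Λ H (gen w)) = f₂ (of Λ H (gen w))) : f₁ = f₂ := by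
  refine hom_ext fun w g => ?_
  obtain ⟨n, rfl⟩ := Subgroup.mem_zpowers_iff.mp (hgen w ▸ Subgroup.mem_top g)
  simp only [map_zpow, h]

theorem mulAut_ext {π σ : MulAut (GraphProduct Λ H)}
    (h : ∀ w (g : H w), π (of Λ H g) = σ (of Λ H g)) : π = σ :=
  MulEquiv.toMonoidHom_injective (hom_ext h)

end GraphProduct

section Components

variable {Γ : SimpleGraph V} {S T C D P Q : Set V} {x y v w : V}

theorem IsCompOf.subset (h : IsCompOf Γ S C) : C ⊆ S := by
  obtain ⟨c, rfl⟩ := h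
  rintro _ ⟨y, -, rfl⟩
  exact y.2

theorem IsCompOf.nonempty (h : IsCompOf Γ S C) : C.Nonempty := by
  obtain ⟨c, rfl⟩ := h
  obtain ⟨a, rfl⟩ := c.exists_rep
  exact ⟨a.1, a, rfl, rfl⟩

theorem exists_isCompOf_mem (Γ : SimpleGraph V) (hx : x ∈ S) : ∃ C, IsCompOf Γ S C ∧ x ∈ C :=
  ⟨_, ⟨(Γ.induce S).connectedComponentMk ⟨x, hx⟩, rfl⟩, ⟨⟨x, hx⟩, rfl, rfl⟩⟩

theorem IsCompOf.mem_of_adj (h : IsCompOf Γ S C) (hx : x ∈ C) (hy : y ∈ S)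
    (hxy : Γ.Adj x y) : y ∈ C := by
  obtain ⟨c, rfl⟩ := h
  obtain ⟨x, rfl, rfl⟩ := hx
  refine ⟨⟨y, hy⟩, ?_, rfl⟩
  exact SimpleGraph.ConnectedComponent.connectedComponentMk_eq_of_adj
    (show (Γ.induce S).Adj ⟨y, hy⟩ x from hxy.symm)

theorem IsCompOf.eq_of_mem (hC : IsCompOf Γ S C) (hD : IsCompOf Γ S D)
    (hxC : x ∈ C) (hxD : x ∈ D) : C = D := by
  obtain ⟨c, rfl⟩ := hC
  obtain ⟨d, rfl⟩ := hD
  obtain ⟨x, hxc, rfl⟩ := hxC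
  obtain ⟨x', hxd, hx'⟩ := hxD
  obtain rfl : x' = x := Subtype.ext hx'
  rw [← hxc, ← hxd]

theorem IsCompOf.subset_of_forall_adj {A : Set V} (hC : IsCompOf Γ S C) (hxC : x ∈ C)
    (hxA : x ∈ A) (hA : ∀ a ∈ A, ∀ b ∈ S, Γ.Adj a b → b ∈ A) : C ⊆ A := by
  obtain ⟨c, rfl⟩ := hC
  obtain ⟨x, rfl, rfl⟩ := hxC
  rintro _ ⟨y, hy, rfl⟩
  obtain ⟨p⟩ := SimpleGraph.ConnectedComponent.exact hy.symm
  clear hy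
  induction p with
  | nil => exact hxA
  | @cons _ z _ hxz _ ih => exact ih (hA _ hxA _ z.2 hxz)

theorem IsCompOf.subset_of_subset (hD : IsCompOf Γ S D) (hC : IsCompOf Γ T C) (hDT : D ⊆ T)
    (hxD : x ∈ D) (hxC : x ∈ C) : D ⊆ C := by
  refine (hD.subset_of_forall_adj (A := C ∩ D) hxD ⟨hxC, hxD⟩ fun a ha b hb hab => ?_).trans
    Set.inter_subset_left
  have hbD := hD.mem_of_adj ha.2 hb hab
  exact ⟨hC.mem_of_adj ha.1 (hDT hbD) hab, hbD⟩

theorem mem_compl_star : x ∈ (star Γ v)ᶜ ↔ x ≠ v ∧ ¬ Γ.Adj v x := by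
  simp [star, not_or]

theorem nonempty_compl_star (hv : v ∉ Delta Γ) : ((star Γ v)ᶜ : Set V).Nonempty := by
  obtain ⟨x, hxv, hvx⟩ : ∃ x, x ≠ v ∧ ¬ Γ.Adj v x := by simpa [Delta] using hv
  exact ⟨x, mem_compl_star.mpr ⟨hxv, hvx⟩⟩

theorem star_inter_star_subset (hvw : v ≠ w) (hn : ¬ Γ.Adj v w) :
    star Γ v ∩ star Γ w ⊆ Γ.neighborSet v ∩ Γ.neighborSet w := by
  rintro _ ⟨rfl | hvx, rfl | hwx⟩
  exacts [absurd rfl hvw, absurd hwx.symm hn, absurd hvx hn, ⟨hvx, hwx⟩]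

theorem IsCompOf.subset_compl_star (hD : IsCompOf Γ S D) (hvS : v ∈ S) (hvD : v ∉ D) :
    D ⊆ (star Γ v)ᶜ := fun _ hx =>
  mem_compl_star.mpr ⟨fun h => hvD (h ▸ hx), fun hvx => hvD (hD.mem_of_adj hx hvS hvx.symm)⟩

theorem mem_or_mem_of_not_hasSIL (hsil : ¬ HasSIL Γ) (hvw : v ≠ w) (hn : ¬ Γ.Adj v w)
    (hP : IsCompOf Γ ((star Γ v)ᶜ) P) (hQ : IsCompOf Γ ((star Γ w)ᶜ) Q)
    (hxP : x ∈ P) (hxQ : x ∈ Q) : w ∈ P ∨ v ∈ Q := by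
  by_contra! h
  obtain ⟨hwP, hvQ⟩ := h
  have hwS : w ∈ (star Γ v)ᶜ := mem_compl_star.mpr ⟨hvw.symm, hn⟩
  have hvS : v ∈ (star Γ w)ᶜ := mem_compl_star.mpr ⟨hvw, fun h => hn h.symm⟩
  have hPw := hP.subset_compl_star hwS hwP
  have hQv := hQ.subset_compl_star hvS hvQ
  have hxL : x ∈ (Γ.neighborSet v ∩ Γ.neighborSet w)ᶜ := fun h => hPw hxP (Or.inr h.2)
  obtain ⟨K, hK, hxK⟩ := exists_isCompOf_mem Γ hxL
  -- `P ∩ Q` is closed under adjacency in `Γ ∖ (lk v ∩ lk w)` but misses `v` and `w`, so the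
  -- component `K` of `x` would be a SIL.
  have hKPQ : K ⊆ P ∩ Q := hK.subset_of_forall_adj hxK ⟨hxP, hxQ⟩ fun a ha b hb hab => by
    have : b ∈ (star Γ v)ᶜ ∨ b ∈ (star Γ w)ᶜ := by
      by_contra! h
      exact hb (star_inter_star_subset hvw hn ⟨not_not.mp h.1, not_not.mp h.2⟩)
    rcases this with hbv | hbw
    · have hbP := hP.mem_of_adj ha.1 hbv hab
      exact ⟨hbP, hQ.mem_of_adj ha.2 (hPw hbP) hab⟩
    · have hbQ := hQ.mem_of_adj ha.2 hbw hab
      exact ⟨hP.mem_of_adj ha.1 (hQv hbQ) hab, hbQ⟩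
  refine hsil ⟨v, w, hvw, hn, K, hK, fun hvK => ?_, fun hwK => hwP (hKPQ hwK).1⟩
  exact (hP.subset (hKPQ hvK).1) (Set.mem_insert v _)

theorem subset_of_not_hasSIL (hsil : ¬ HasSIL Γ) (hvw : v ≠ w) (hn : ¬ Γ.Adj v w)
    (hC : IsCompOf Γ ((star Γ v)ᶜ) C) (hD : IsCompOf Γ ((star Γ w)ᶜ) D)
    (hwC : w ∈ C) (hvD : v ∉ D) : D ⊆ C := by
  have hDv := hD.subset_compl_star (mem_compl_star.mpr ⟨hvw, fun h => hn h.symm⟩) hvD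
  obtain ⟨x, hxD⟩ := hD.nonempty
  obtain ⟨C', hC', hxC'⟩ := exists_isCompOf_mem Γ (hDv hxD)
  have hwC' := (mem_or_mem_of_not_hasSIL hsil hvw hn hC' hD hxC' hxD).resolve_right hvD
  exact hC.eq_of_mem hC' hwC hwC' ▸ hD.subset_of_subset hC' hDv hxD hxC'

theorem mem_or_mem_of_not_hasSIL' (hsil : ¬ HasSIL Γ) (hvw : v ≠ w) (hn : ¬ Γ.Adj v w)
    (hP : IsCompOf Γ ((star Γ v)ᶜ) P) (hQ : IsCompOf Γ ((star Γ w)ᶜ) Q)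
    (hxP : x ∈ P) (hyQ : y ∈ Q) (hxy : x ∈ (star Γ w)ᶜ → x = y) : w ∈ P ∨ v ∈ Q := by
  by_cases hx : x ∈ (star Γ w)ᶜ
  · exact mem_or_mem_of_not_hasSIL hsil hvw hn hP hQ hxP (hxy hx ▸ hyQ)
  · rcases not_not.mp hx with rfl | hwx
    · exact Or.inl hxP
    · exact Or.inl (hP.mem_of_adj hxP (mem_compl_star.mpr ⟨hvw.symm, hn⟩) hwx.symm)

structure IsCoherentChoice (Γ : SimpleGraph V) (sel : V → Set V) : Prop where
  isCompOf : ∀ v ∉ Delta Γ, IsCompOf Γ ((star Γ v)ᶜ) (sel v)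
  mem_or_mem : ∀ v w, v ≠ w → ¬ Γ.Adj v w → w ∈ sel v ∨ v ∈ sel w

/-- Choosing, for each `v`, the component of `Γ ∖ st(v)` containing the least vertex of
`Γ ∖ st(v)` for a fixed well-order makes the choices compatible. -/
theorem exists_coherent_components (hsil : ¬ HasSIL Γ) :
    ∃ sel : V → Set V, IsCoherentChoice Γ sel := by
  classical
  let r : V → V → Prop := WellOrderingRel
  obtain ⟨m, hm_mem, hm_min⟩ : ∃ m : V → V, (∀ v ∉ Delta Γ, m v ∈ (star Γ v)ᶜ) ∧
      ∀ v, ∀ x ∈ (star Γ v)ᶜ, ¬ r x (m v) := by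
    refine ⟨fun v => if h : ((star Γ v)ᶜ : Set V).Nonempty then
      (IsWellFounded.wf : WellFounded r).min _ h else v, fun v hv => ?_, fun v x hx => ?_⟩
    · dsimp only
      rw [dif_pos (nonempty_compl_star hv)]
      exact WellFounded.min_mem _ _ _
    · dsimp only
      rw [dif_pos ⟨x, hx⟩]
      exact WellFounded.not_lt_min _ _ hx
  have : ∀ v, ∃ C, v ∉ Delta Γ → IsCompOf Γ ((star Γ v)ᶜ) C ∧ m v ∈ C := fun v => by
    by_cases hv : v ∈ Delta Γ
    · exact ⟨∅, fun h => absurd hv h⟩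
    · obtain ⟨C, hC⟩ := exists_isCompOf_mem Γ (hm_mem v hv)
      exact ⟨C, fun _ => hC⟩
  choose sel hsel using this
  refine ⟨sel, fun v hv => (hsel v hv).1, ?_⟩
  have key : ∀ v w, v ≠ w → ¬ Γ.Adj v w → ¬ r (m w) (m v) → w ∈ sel v ∨ v ∈ sel w := by
    intro v w hvw hn hr
    have hv : v ∉ Delta Γ := fun h => hn (h w hvw.symm)
    have hw : w ∉ Delta Γ := fun h => hn (h v hvw).symm
    refine mem_or_mem_of_not_hasSIL' hsil hvw hn (hsel v hv).1 (hsel w hw).1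
      (hsel v hv).2 (hsel w hw).2 fun hx => ?_
    exact ((trichotomous_of r _ _).resolve_left (hm_min w _ hx)).resolve_right hr
  intro v w hvw hn
  by_cases hr : r (m w) (m v)
  · exact (key w v hvw.symm (fun h => hn h.symm) (asymm hr)).symm
  · exact key v w hvw hn hr

end Components

theorem _root_.Commute.conj_conj_comm {K : Type*} [Group K] {x y : K} (h : Commute x y) (g : K) :
    y * (x * g * x⁻¹) * y⁻¹ = x * (y * g * y⁻¹) * x⁻¹ := by
  rw [show y * (x * g * x⁻¹) * y⁻¹ = y * x * g * (y * x)⁻¹ by group, ← h.eq]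
  group

section PartialConjugation

variable {W : Type*} {Λ : SimpleGraph W} {H : W → Type*} [∀ w, Group (H w)] {v : W} {S : Set W}

theorem commute_of_mem_star {w : W} (hw : w ∈ star Λ v) (hv : ∀ a b : H v, Commute a b)
    (a : H v) (g : H w) : Commute (of Λ H a) (of Λ H g) := by
  rcases hw with rfl | hvw
  · exact (hv a g).map _
  · exact of_commute Λ H hvw a g

open Classical in
noncomputable def partialConjEnd (hv : ∀ a b : H v, Commute a b)
    (hS : ∀ x ∈ S, ∀ y ∉ S, Λ.Adj x y → y ∈ star Λ v) (a : H v) :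
    GraphProduct Λ H →* GraphProduct Λ H :=
  GraphProduct.lift Λ H
    (fun u => (MulAut.conj (if u ∈ S then of Λ H a else 1)).toMonoidHom.comp (of Λ H))
    fun x y hxy g k => by
      have hgk := of_commute Λ H hxy g k
      have hconj {x y : W} (hxy : Λ.Adj x y) (hx : x ∈ S) (hy : y ∉ S) (g : H x) (k : H y) :
          Commute (of Λ H a * of Λ H g * (of Λ H a)⁻¹) (of Λ H k) := by
        have hak := commute_of_mem_star (hS x hx y hy hxy) hv a k
        exact (hak.mul_left (of_commute Λ H hxy g k)).mul_left hak.inv_left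
      by_cases hx : x ∈ S <;> by_cases hy : y ∈ S <;>
        simp only [hx, hy, if_true, if_false, MonoidHom.comp_apply, MulEquiv.coe_toMonoidHom,
          MulAut.conj_apply, one_mul, mul_one, inv_one]
      exacts [hgk.conj _, hconj hxy hx hy g k,
        (hconj hxy.symm hy hx k g).symm, hgk]

variable {hv : ∀ a b : H v, Commute a b} {hS : ∀ x ∈ S, ∀ y ∉ S, Λ.Adj x y → y ∈ star Λ v}

theorem partialConjEnd_of_mem (a : H v) {u : W} (hu : u ∈ S) (g : H u) :
    partialConjEnd hv hS a (of Λ H g) = of Λ H a * of Λ H g * (of Λ H a)⁻¹ := by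
  simp [partialConjEnd, hu]

theorem partialConjEnd_of_notMem (a : H v) {u : W} (hu : u ∉ S) (g : H u) :
    partialConjEnd hv hS a (of Λ H g) = of Λ H g := by
  simp [partialConjEnd, hu]

theorem partialConjEnd_one : partialConjEnd hv hS 1 = MonoidHom.id _ :=
  GraphProduct.hom_ext fun u g => by
    by_cases hu : u ∈ S
    · simp [partialConjEnd_of_mem _ hu]
    · simp [partialConjEnd_of_notMem _ hu]

theorem partialConjEnd_mul (a b : H v) :
    partialConjEnd hv hS (a * b) = (partialConjEnd hv hS a).comp (partialConjEnd hv hS b) := by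
  have hab : partialConjEnd hv hS a (of Λ H b) = of Λ H b := by
    by_cases hvS : v ∈ S
    · rw [partialConjEnd_of_mem _ hvS, (hv a b).map (of Λ H) |>.eq, mul_inv_cancel_right]
    · exact partialConjEnd_of_notMem _ hvS b
  refine GraphProduct.hom_ext fun u g => ?_
  by_cases hu : u ∈ S
  · simp only [MonoidHom.comp_apply, partialConjEnd_of_mem _ hu, map_mul, map_inv, hab,
      ((hv a b).map (of Λ H)).conj_conj_comm]
    group
  · simp [partialConjEnd_of_notMem _ hu]

variable (hv hS) in
noncomputable def partialConj : H v →* MulAut (GraphProduct Λ H) where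
  toFun a := (partialConjEnd hv hS a).toMulEquiv (partialConjEnd hv hS a⁻¹)
    (by rw [← partialConjEnd_mul, inv_mul_cancel, partialConjEnd_one])
    (by rw [← partialConjEnd_mul, mul_inv_cancel, partialConjEnd_one])
  map_one' := MulEquiv.ext fun x => by simp [partialConjEnd_one]
  map_mul' a b := MulEquiv.ext fun x => by simp [partialConjEnd_mul]

theorem isPartialConjBy_partialConj (a : H v) :
    IsPartialConjBy Λ H a (partialConj hv hS a) S :=
  ⟨fun _ hu g => partialConjEnd_of_mem (hv := hv) (hS := hS) a hu g,
    fun _ hu g => partialConjEnd_of_notMem (hv := hv) (hS := hS) a hu g⟩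

variable {w : W} {a : H v} {b : H w} {π σ : MulAut (GraphProduct Λ H)} {T : Set W}

theorem IsPartialConjBy.apply_of_commute (hπ : IsPartialConjBy Λ H a π S) {u : W} {g : H u}
    (h : Commute (of Λ H a) (of Λ H g)) : π (of Λ H g) = of Λ H g := by
  by_cases hu : u ∈ S
  · rw [hπ.1 u hu, h.eq, mul_inv_cancel_right]
  · exact hπ.2 u hu g

theorem IsPartialConjBy.commute_of_commute (hπ : IsPartialConjBy Λ H a π S)
    (hσ : IsPartialConjBy Λ H b σ T) (hab : Commute (of Λ H a) (of Λ H b)) : Commute π σ := by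
  have hπb := hπ.apply_of_commute hab
  have hσa := hσ.apply_of_commute hab.symm
  refine GraphProduct.mulAut_ext fun u g => ?_
  simp only [MulAut.mul_apply]
  by_cases hS : u ∈ S <;> by_cases hT : u ∈ T <;>
    simp [hπ.1 u, hπ.2 u, hσ.1 u, hσ.2 u, hS, hT, hπb, hσa, hab.conj_conj_comm]

theorem IsPartialConjBy.commute_of_subset (hπ : IsPartialConjBy Λ H a π S)
    (hσ : IsPartialConjBy Λ H b σ T) (hwS : w ∈ S) (hvT : v ∉ T) (hTS : T ⊆ S) :
    Commute π σ := by
  refine GraphProduct.mulAut_ext fun u g => ?_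
  simp only [MulAut.mul_apply]
  by_cases hT : u ∈ T
  · simp [hπ.1 u (hTS hT), hπ.1 w hwS, hσ.1 u hT, hσ.2 v hvT, mul_assoc]
  · by_cases hS : u ∈ S <;> simp [hπ.1 u, hπ.2 u, hσ.2 u, hσ.2 v hvT, hS, hT]

theorem IsPartialConjBy.commute_of_disjoint (hπ : IsPartialConjBy Λ H a π S)
    (hσ : IsPartialConjBy Λ H b σ T) (hwS : w ∉ S) (hvT : v ∉ T) (hST : Disjoint S T) :
    Commute π σ := by
  refine GraphProduct.mulAut_ext fun u g => ?_
  simp only [MulAut.mul_apply]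
  by_cases hS : u ∈ S
  · have hT : u ∉ T := hST.notMem_of_mem_left hS
    simp [hπ.1 u hS, hσ.2 u hT, hσ.2 v hvT]
  · by_cases hT : u ∈ T <;> simp [hπ.2 u hS, hπ.2 w hwS, hσ.1 u, hσ.2 u, hT]

theorem isPartialConjBy_one : IsPartialConjBy Λ H a 1 ∅ :=
  ⟨fun _ hu => absurd hu (Set.notMem_empty _), fun _ _ _ => rfl⟩

theorem IsPartialConjBy.mul (hπ : IsPartialConjBy Λ H a π S) (hσ : IsPartialConjBy Λ H a σ T)
    (hST : Disjoint S T) : IsPartialConjBy Λ H a (π * σ) (S ∪ T) := by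
  have hπa := hπ.apply_of_commute (Commute.refl _)
  refine ⟨fun u hu g => ?_, fun u hu g => ?_⟩
  · rcases hu with hS | hT
    · simp [hσ.2 u (hST.notMem_of_mem_left hS), hπ.1 u hS]
    · simp [hσ.1 u hT, hπ.2 u (hST.notMem_of_mem_right hT), hπa]
  · simp [hσ.2 u (fun h => hu (Or.inr h)), hπ.2 u (fun h => hu (Or.inl h))]

theorem isPartialConjBy_noncommProd {ι : Type*} (s : Finset ι) (f : ι → MulAut (GraphProduct Λ H))
    (comm : (s : Set ι).Pairwise fun i j => Commute (f i) (f j)) (S : ι → Set W)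
    (hf : ∀ i ∈ s, IsPartialConjBy Λ H a (f i) (S i)) (hS : (s : Set ι).PairwiseDisjoint S) :
    IsPartialConjBy Λ H a (s.noncommProd f comm) (⋃ i ∈ s, S i) := by
  classical
  induction s using Finset.induction_on with
  | empty => simpa using isPartialConjBy_one
  | @insert i s hi ih =>
    rw [Finset.noncommProd_insert_of_notMem _ _ _ _ hi, Finset.set_biUnion_insert]
    refine (hf i (s.mem_insert_self i)).mul
      (ih (comm.mono (by simp)) (fun j hj => hf j (Finset.mem_insert_of_mem hj))
        (hS.subset (by simp))) ?_
    exact Set.disjoint_iUnion₂_right.mpr fun j hj =>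
      hS (by simp) (by simp [hj]) (fun h => hi (h ▸ hj))

theorem IsPartialConjBy.eq_conj (hπ : IsPartialConjBy Λ H a π S)
    (h : ∀ u ∉ S, ∀ g : H u, Commute (of Λ H a) (of Λ H g)) : π = MulAut.conj (of Λ H a) :=
  GraphProduct.mulAut_ext fun u g => by
    by_cases hu : u ∈ S
    · rw [hπ.1 u hu, MulAut.conj_apply]
    · rw [hπ.2 u hu, MulAut.conj_apply, (h u hu g).eq, mul_inv_cancel_right]

end PartialConjugation

section Extension

variable {Γ : SimpleGraph V} {G : V → Type uG} [∀ v, Group (G v)]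

variable (Γ) in
abbrev extGraph : SimpleGraph (Option V) := Γ.map Function.Embedding.some

variable (G) in
def extFam : Option V → Type uG
  | none => ULift (Multiplicative ℤ)
  | some v => G v

instance : ∀ o, Group (extFam G o)
  | none => inferInstanceAs (Group (ULift (Multiplicative ℤ)))
  | some v => inferInstanceAs (Group (G v))

def extComp (sel : V → Set V) (v : V) (C : Set V) : Set (Option V) :=
  {o | o.elim (C = sel v) (· ∈ C)}

theorem extGraph_adj_some {x y : V} : (extGraph Γ).Adj (some x) (some y) ↔ Γ.Adj x y :=
  SimpleGraph.map_adj_apply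

theorem not_extGraph_adj_none {o : Option V} : ¬ (extGraph Γ).Adj none o := by
  simp

theorem forall_adj_mem_star_extComp {sel : V → Set V} {v : V} {C : Set V}
    (hC : IsCompOf Γ ((star Γ v)ᶜ) C) :
    ∀ x ∈ extComp sel v C, ∀ y ∉ extComp sel v C, (extGraph Γ).Adj x y →
      y ∈ star (extGraph Γ) (some v) := by
  rintro (_ | x) hx (_ | y) hy hxy
  · exact absurd hxy not_extGraph_adj_none
  · exact absurd hxy not_extGraph_adj_none
  · exact absurd hxy.symm not_extGraph_adj_none
  · have hyv : y ∈ star Γ v :=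
      not_not.mp fun h => hy (hC.mem_of_adj hx h (extGraph_adj_some.mp hxy))
    rcases hyv with rfl | hvy
    exacts [Or.inl rfl, Or.inr (extGraph_adj_some.mpr hvy)]

variable {sel : V → Set V} {v w : V} {C D : Set V}

theorem disjoint_extComp (hC : IsCompOf Γ ((star Γ v)ᶜ) C) (hD : IsCompOf Γ ((star Γ v)ᶜ) D)
    (hCD : C ≠ D) : Disjoint (extComp sel v C) (extComp sel v D) := by
  rw [Set.disjoint_left]
  rintro (_ | x) hxC hxD
  exacts [hCD (hxC.trans hxD.symm), hCD (hC.eq_of_mem hD hxC hxD)]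

theorem exists_mem_extComp (hsel : IsCoherentChoice Γ sel) (hv : v ∉ Delta Γ) {o : Option V}
    (ho : o ∉ star (extGraph Γ) (some v)) :
    ∃ C, IsCompOf Γ ((star Γ v)ᶜ) C ∧ o ∈ extComp sel v C := by
  rcases o with _ | x
  · exact ⟨sel v, hsel.isCompOf v hv, rfl⟩
  · refine exists_isCompOf_mem Γ fun hx => ho ?_
    rcases hx with rfl | hvx
    exacts [Or.inl rfl, Or.inr (extGraph_adj_some.mpr hvx)]

theorem extComp_subset_of_not_hasSIL (hsil : ¬ HasSIL Γ) (hsel : IsCoherentChoice Γ sel)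
    (hvw : v ≠ w) (hn : ¬ Γ.Adj v w) (hC : IsCompOf Γ ((star Γ v)ᶜ) C)
    (hD : IsCompOf Γ ((star Γ w)ᶜ) D) (hwC : w ∈ C) (hvD : v ∉ D) :
    extComp sel w D ⊆ extComp sel v C := by
  rintro (_ | x) hx
  · have hv : v ∉ Delta Γ := fun h => hn (h w hvw.symm)
    have hwsel := (hsel.mem_or_mem v w hvw hn).resolve_right (fun h => hvD (hx ▸ h))
    exact hC.eq_of_mem (hsel.isCompOf v hv) hwC hwsel
  · exact subset_of_not_hasSIL hsil hvw hn hC hD hwC hvD hx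

theorem disjoint_extComp_of_not_hasSIL (hsil : ¬ HasSIL Γ) (hsel : IsCoherentChoice Γ sel)
    (hvw : v ≠ w) (hn : ¬ Γ.Adj v w) (hC : IsCompOf Γ ((star Γ v)ᶜ) C)
    (hD : IsCompOf Γ ((star Γ w)ᶜ) D) (hwC : w ∉ C) (hvD : v ∉ D) :
    Disjoint (extComp sel v C) (extComp sel w D) := by
  rw [Set.disjoint_left]
  rintro (_ | x) hxC hxD
  · rcases hsel.mem_or_mem v w hvw hn with h | h
    exacts [hwC (hxC ▸ h), hvD (hxD ▸ h)]
  · exact (mem_or_mem_of_not_hasSIL hsil hvw hn hC hD hxC hxD).elim hwC hvD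

theorem commute_of_tilde_adj (hsil : ¬ HasSIL Γ) (hsel : IsCoherentChoice Γ sel)
    (hG : ∀ v, ∀ a b : G v, Commute a b) {p q : TV Γ} (hpq : (tilde Γ).Adj p q)
    {a : G p.1.1} {b : G q.1.1} {π σ : MulAut (GraphProduct (extGraph Γ) (extFam G))}
    (hπ : IsPartialConjBy (extGraph Γ) (extFam G) (v := some p.1.1) a π
      (extComp sel p.1.1 p.1.2))
    (hσ : IsPartialConjBy (extGraph Γ) (extFam G) (v := some q.1.1) b σ
      (extComp sel q.1.1 q.1.2)) :
    Commute π σ := by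
  obtain ⟨⟨v, C⟩, hC⟩ := p
  obtain ⟨⟨w, D⟩, hD⟩ := q
  obtain ⟨-, hpq⟩ := hpq
  dsimp only at a b hC hD hπ hσ hpq
  by_cases hvw : v = w
  · subst hvw
    exact hπ.commute_of_commute hσ ((hG v a b).map _)
  by_cases hn : Γ.Adj v w
  · exact hπ.commute_of_commute hσ (of_commute _ _ (extGraph_adj_some.mpr hn) _ _)
  by_cases hwC : w ∈ C
  · have hvD : v ∉ D := fun hvD => hpq ⟨hvw, hn, hvD, hwC⟩
    exact hπ.commute_of_subset hσ hwC hvD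
      (extComp_subset_of_not_hasSIL hsil hsel hvw hn hC hD hwC hvD)
  by_cases hvD : v ∈ D
  · exact (hσ.commute_of_subset hπ hvD hwC (extComp_subset_of_not_hasSIL hsil hsel
      (Ne.symm hvw) (fun h => hn h.symm) hD hC hvD hwC)).symm
  · exact hπ.commute_of_disjoint hσ hwC hvD
      (disjoint_extComp_of_not_hasSIL hsil hsel hvw hn hC hD hwC hvD)

theorem exists_hom_isPartialConjBy (hsil : ¬ HasSIL Γ) (hsel : IsCoherentChoice Γ sel)
    (hG : ∀ v, ∀ a b : G v, Commute a b) :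
    ∃ Φ : TildeProduct Γ G →* MulAut (GraphProduct (extGraph Γ) (extFam G)),
      ∀ (p : TV Γ) (a : G p.1.1), IsPartialConjBy (extGraph Γ) (extFam G) (v := some p.1.1) a
        (Φ (of (tilde Γ) (fun p : TV Γ => G p.1.1) a)) (extComp sel p.1.1 p.1.2) := by
  let π (p : TV Γ) : G p.1.1 →* MulAut (GraphProduct (extGraph Γ) (extFam G)) :=
    partialConj (H := extFam G) (v := some p.1.1) (hG p.1.1)
      (forall_adj_mem_star_extComp (sel := sel) p.2)
  have hπ (p : TV Γ) (a : G p.1.1) :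
      IsPartialConjBy (extGraph Γ) (extFam G) (v := some p.1.1) a (π p a)
        (extComp sel p.1.1 p.1.2) :=
    isPartialConjBy_partialConj (H := extFam G) (v := some p.1.1) a
  refine ⟨GraphProduct.lift _ _ π fun p q hpq a b =>
    commute_of_tilde_adj hsil hsel hG hpq (hπ p a) (hπ q b), fun p a => ?_⟩
  rw [GraphProduct.lift_of]
  exact hπ p a

end Extension

section Pvert

variable {Γ : SimpleGraph V} {G : V → Type uG} [∀ v, Group (G v)] {sel : V → Set V}

theorem map_pvert_eq_conj [Finite V] (hsel : IsCoherentChoice Γ sel)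
    (hG : ∀ v, ∀ a b : G v, Commute a b) (gen : ∀ v, G v)
    {Φ : TildeProduct Γ G →* MulAut (GraphProduct (extGraph Γ) (extFam G))}
    (hΦ : ∀ (p : TV Γ) (a : G p.1.1), IsPartialConjBy (extGraph Γ) (extFam G) (v := some p.1.1) a
        (Φ (of (tilde Γ) (fun p : TV Γ => G p.1.1) a)) (extComp sel p.1.1 p.1.2))
    {u : V} (hu : u ∉ Delta Γ) :
    Φ (pvert Γ G gen u) = MulAut.conj (of (extGraph Γ) (extFam G) (v := some u) (gen u)) := by
  let _ := Fintype.ofFinite {C : Set V // IsCompOf Γ ((star Γ u)ᶜ) C}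
  refine (Finset.map_noncommProd _ _ _ Φ).trans ?_
  refine (isPartialConjBy_noncommProd _ _ _ (fun c => extComp sel u c.1)
    (fun c _ => hΦ ⟨(u, c.1), c.2⟩ (gen u))
    (fun c _ d _ hcd => disjoint_extComp c.2 d.2 (Subtype.coe_ne_coe.mpr hcd))).eq_conj ?_
  intro o ho g
  by_cases hstar : o ∈ star (extGraph Γ) (some u)
  · exact commute_of_mem_star hstar (hG u) _ g
  · obtain ⟨C, hC, hoC⟩ := exists_mem_extComp hsel hu hstar
    exact absurd (Set.mem_biUnion (Finset.mem_univ ⟨C, hC⟩) hoC) ho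

end Pvert

theorem _root_.Monoid.CoprodI.eq_one_of_commute_of_ne {ι : Type*} {M : ι → Type*}
    [∀ i, Group (M i)] {i j : ι} (hij : i ≠ j) {a : M i} {b : M j} (hb : b ≠ 1)
    (h : Commute (CoprodI.of a) (CoprodI.of b)) : a = 1 := by
  classical
  by_contra ha
  let w₁ : CoprodI.Word M := ⟨[⟨i, a⟩, ⟨j, b⟩], by simp [ha, hb], by simp [hij]⟩
  let w₂ : CoprodI.Word M := ⟨[⟨j, b⟩, ⟨i, a⟩], by simp [ha, hb], by simp [hij.symm]⟩
  have hw : w₁ = w₂ := CoprodI.Word.equiv.symm.injective <| by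
    simpa [w₁, w₂, CoprodI.Word.equiv, CoprodI.Word.prod] using h.eq
  have := congrArg (fun w : CoprodI.Word M => w.toList.head?.map Sigma.fst) hw
  simp only [w₁, w₂, List.head?_cons, Option.map_some, Option.some.injEq] at this
  exact hij this

section Splitting

variable (Γ : SimpleGraph V) (G : V → Type uG) [∀ v, Group (G v)]

noncomputable def coreIncl :
    GraphProduct (Γ.induce (Delta Γ)ᶜ) (fun u : ↥(Delta Γ)ᶜ => G u.1) →*
      GraphProduct (extGraph Γ) (extFam G) :=
  GraphProduct.lift _ _ (fun u => of (extGraph Γ) (extFam G) (v := some u.1))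
    fun _ _ hxy g k =>
      of_commute (extGraph Γ) (extFam G) ((extGraph_adj_some (Γ := Γ)).mpr hxy) g k

theorem coreIncl_of {u : ↥(Delta Γ)ᶜ} (g : G u.1) :
    coreIncl Γ G (of (Γ.induce (Delta Γ)ᶜ) (fun u : ↥(Delta Γ)ᶜ => G u.1) g) =
      of (extGraph Γ) (extFam G) (v := some u.1) g :=
  GraphProduct.lift_of (Λ := Γ.induce (Delta Γ)ᶜ) (H := fun u : ↥(Delta Γ)ᶜ => G u.1) g

def splitFam : Bool → Type (max u uG)
  | false => GraphProduct (Γ.induce (Delta Γ)ᶜ) (fun u : ↥(Delta Γ)ᶜ => G u.1)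
  | true => ULift (Multiplicative ℤ)

instance : ∀ b, Group (splitFam Γ G b)
  | false => inferInstanceAs (Group (GraphProduct (Γ.induce (Delta Γ)ᶜ) _))
  | true => inferInstanceAs (Group (ULift (Multiplicative ℤ)))

open Classical in
noncomputable def splitting : GraphProduct (extGraph Γ) (extFam G) →* CoprodI (splitFam Γ G) :=
  GraphProduct.lift _ _
    (fun o => match o with
      | none => (CoprodI.of (M := splitFam Γ G) (i := true)).comp
          (MulEquiv.ulift.symm.toMonoidHom.comp MulEquiv.ulift.toMonoidHom)
      | some v => if h : v ∈ Delta Γ then 1 else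
          (CoprodI.of (M := splitFam Γ G) (i := false)).comp
            (of (Γ.induce (Delta Γ)ᶜ) (fun u : ↥(Delta Γ)ᶜ => G u.1) (v := ⟨v, h⟩)))
    fun x y hxy g k => by
      rcases x with _ | x
      · exact absurd hxy not_extGraph_adj_none
      rcases y with _ | y
      · exact absurd hxy.symm not_extGraph_adj_none
      dsimp only
      by_cases hx : x ∈ Delta Γ
      · simp [hx]
      by_cases hy : y ∈ Delta Γ
      · simp [hy]
      simp only [hx, hy, dite_false]
      have hxy : (Γ.induce (Delta Γ)ᶜ).Adj ⟨x, hx⟩ ⟨y, hy⟩ := (extGraph_adj_some (Γ := Γ)).mp hxy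
      exact (of_commute _ (fun u : ↥(Delta Γ)ᶜ => G u.1) hxy g k).map
        (CoprodI.of (M := splitFam Γ G) (i := false))

theorem splitting_comp_coreIncl :
    (splitting Γ G).comp (coreIncl Γ G) = CoprodI.of (M := splitFam Γ G) (i := false) :=
  GraphProduct.hom_ext fun u g => by
    rw [MonoidHom.comp_apply, coreIncl_of]
    refine (GraphProduct.lift_of (Λ := extGraph Γ) (H := extFam G) (w := some u.1) g).trans ?_
    simp only [show u.1 ∉ Delta Γ from u.2, dite_false]
    rfl

theorem splitting_of_none (t : Multiplicative ℤ) :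
    splitting Γ G (of (extGraph Γ) (extFam G) (v := none) (ULift.up t)) =
      CoprodI.of (M := splitFam Γ G) (i := true) (ULift.up t) :=
  GraphProduct.lift_of (Λ := extGraph Γ) (H := extFam G) (w := none) _

theorem eq_one_of_commute_coreIncl
    {x : GraphProduct (Γ.induce (Delta Γ)ᶜ) (fun u : ↥(Delta Γ)ᶜ => G u.1)}
    (h : Commute (coreIncl Γ G x)
      (of (extGraph Γ) (extFam G) (v := none) (ULift.up (Multiplicative.ofAdd 1)))) : x = 1 := by
  have h := h.map (splitting Γ G)
  rw [← MonoidHom.comp_apply, splitting_comp_coreIncl, splitting_of_none] at h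
  refine Monoid.CoprodI.eq_one_of_commute_of_ne Bool.false_ne_true (fun h1 => ?_) h
  have h1 : Multiplicative.ofAdd (1 : ℤ) = 1 := congrArg ULift.down h1
  simp at h1

end Splitting

theorem ftilde_injective_general {V : Type u} [Finite V] (Γ : SimpleGraph V)
    (hsil : ¬ HasSIL Γ)
    (G : V → Type uG) [∀ v, Group (G v)]
    (gen : ∀ v, G v) (hgen : ∀ v, Subgroup.zpowers (gen v) = ⊤)
    (f : GraphProduct (Γ.induce (Delta Γ)ᶜ) (fun u : ↥(Delta Γ)ᶜ => G u.1) →*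
      TildeProduct Γ G)
    (hf : ∀ u : ↥(Delta Γ)ᶜ,
      f (of (Γ.induce (Delta Γ)ᶜ) (fun x : ↥(Delta Γ)ᶜ => G x.1) (v := u) (gen u.1)) =
        pvert Γ G gen u.1) :
    Function.Injective f := by
  have hG (v : V) (a b : G v) : Commute a b :=
    have : IsCyclic (G v) := isCyclic_iff_exists_zpowers_eq_top.mpr ⟨gen v, hgen v⟩
    mul_comm' a b
  obtain ⟨sel, hsel⟩ := exists_coherent_components hsil
  obtain ⟨Φ, hΦ⟩ := exists_hom_isPartialConjBy hsil hsel hG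
  have hΦf : Φ.comp f = MulAut.conj.comp (coreIncl Γ G) :=
    GraphProduct.hom_ext_of_zpowers (fun u => hgen u.1) fun u => by
      simp only [MonoidHom.comp_apply, hf, map_pvert_eq_conj hsel hG gen hΦ u.2, coreIncl_of]
  refine (injective_iff_map_eq_one f).mpr fun x hx => eq_one_of_commute_coreIncl Γ G ?_
  -- Conjugation by `coreIncl x` is `Φ (f x) = 1`.
  have := DFunLike.congr_fun (DFunLike.congr_fun hΦf x)
    (of (extGraph Γ) (extFam G) (v := none) (ULift.up (Multiplicative.ofAdd 1)))
  simp only [MonoidHom.comp_apply, hx, map_one, MulAut.one_apply, MulAut.conj_apply] at this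
  exact mul_inv_eq_iff_eq_mul.mp this.symm

/-- The homomorphism `f̃ : G_{Γ₀} → G_{Γ̃}` determined by `v ↦ p_v` is
injective. -/
theorem ftilde_injective {V : Type u} [Finite V] (Γ : SimpleGraph V)
    (hconn : Γ.Connected) (hsil : ¬ HasSIL Γ)
    (G : V → Type uG) [∀ v, Group (G v)] [∀ v, Nontrivial (G v)]
    (gen : ∀ v, G v) (hgen : ∀ v, Subgroup.zpowers (gen v) = ⊤)
    (f : GraphProduct (Γ.induce (Delta Γ)ᶜ) (fun u : ↥(Delta Γ)ᶜ => G u.1) →*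
      TildeProduct Γ G)
    (hf : ∀ u : ↥(Delta Γ)ᶜ,
      f (of (Γ.induce (Delta Γ)ᶜ) (fun x : ↥(Delta Γ)ᶜ => G x.1) (v := u) (gen u.1)) =
        pvert Γ G gen u.1) :
    Function.Injective f :=
  ftilde_injective_general Γ hsil G gen hgen f hf

end ArXiv
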